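/- The trace language of any Kripke structure (with a finite state type) is a closed language of ω-words: it contains all of its accumulation points. -/
import Mathlib


/-- A Kripke structure with labels in `α`: finite state type, transition
relation, initial states, and labeling. -/
structure KripkeStructure (α : Type) where
  S : Type
  [finS : Fintype S]
  R : S → S → Prop
  I : Set S
  label : S → α

/-- The trace language of a Kripke structure: labelings of infinite executions. -/
def KripkeStructure.Traces {α : Type} (K : KripkeStructure α) : Set (ℕ → α) :=
  {x | ∃ w : ℕ → K.S, w 0 ∈ K.I ∧ (∀ k, K.R (w k) (w (k + 1))) ∧ x = K.label ∘ w}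

/-- A language of ω-words is closed if it contains all its accumulation points. -/
def IsClosedLang {α : Type} (L : Set (ℕ → α)) : Prop :=
  ∀ w : ℕ → α, (∀ n : ℕ, ∃ v ∈ L, ∀ k < n, v k = w k) → w ∈ L

/-- The trace language of any Kripke structure (with finite state type) is a
closed language of ω-words. -/
theorem kripke_traces_isClosedLang {α : Type} (K : KripkeStructure α) :
    IsClosedLang K.Traces := by
  haveI := K.finS
  intro w hw
  -- choose approximating executions
  choose v hvT hvw using hw
  choose f hf0 hfR hfl using hvT
  -- an ultrafilter extending atTop
  obtain ⟨U, hU⟩ := Filter.exists_ultrafilter_le (Filter.atTop : Filter ℕ)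
  -- for each k, some state occurs U-often at position k
  have key : ∀ k : ℕ, ∃ s : K.S, {n : ℕ | f n k = s} ∈ U := by
    intro k
    by_contra h
    push_neg at h
    have h' : ∀ s : K.S, {n : ℕ | f n k ≠ s} ∈ U := by
      intro s
      have := (U.compl_mem_iff_notMem (s := {n : ℕ | f n k = s})).2 (h s)
      simpa [Set.compl_setOf] using this
    have : (⋂ s : K.S, {n : ℕ | f n k ≠ s}) ∈ U := Filter.iInter_mem.2 h'
    obtain ⟨n, hn⟩ := U.nonempty_of_mem this
    simp only [Set.mem_iInter, Set.mem_setOf_eq] at hn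
    exact hn (f n k) rfl
  choose g hg using key
  refine ⟨g, ?_, ?_, ?_⟩
  · obtain ⟨n, hn⟩ := U.nonempty_of_mem (hg 0)
    exact hn ▸ hf0 n
  · intro k
    obtain ⟨n, hn1, hn2⟩ := U.nonempty_of_mem (Filter.inter_mem (hg k) (hg (k + 1)))
    rw [← hn1, ← hn2]
    exact hfR n k
  · funext k
    have hmem : {n : ℕ | f n k = g k} ∩ {n : ℕ | k < n} ∈ U :=
      Filter.inter_mem (hg k) (hU (Filter.eventually_gt_atTop k))
    obtain ⟨n, hn1, hn2⟩ := U.nonempty_of_mem hmem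
    have := hvw n k hn2
    rw [hfl n] at this
    rw [Set.mem_setOf_eq] at hn1
    simp only [Function.comp_apply] at this ⊢
    rw [← hn1]
    exact this.symm
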